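/- Let k be a field and m ≥ n ≥ 1. For every 1 ≤ j ≤ mn and every row vector v ∈ k^{mn−j}, there exists 0 ≤ r ≤ n−1 such that the double cosets coincide: P_{mn−1,1}(k)·w_j·u_j(v)·T_{m,n}(k) = P_{mn−1,1}(k)·ε_r·T_{m,n}(k). -/

import Mathlib

open Matrix

/-- Kronecker product of square matrices, realized on `Fin (m * n)`:
the `(i,j)` block of size `n` is `h i j • g`. -/
def kron {k : Type*} [Field k] {m n : ℕ} (h : Matrix (Fin m) (Fin m) k)
    (g : Matrix (Fin n) (Fin n) k) : Matrix (Fin (m * n)) (Fin (m * n)) k :=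
  Matrix.of fun x y => h x.divNat y.divNat * g x.modNat y.modNat

/-- `T_{m,n}(k)`: the image of the Kronecker product map on invertible matrices. -/
def TSet (k : Type*) [Field k] (m n : ℕ) : Set (Matrix (Fin (m * n)) (Fin (m * n)) k) :=
  {A | ∃ (h : Matrix (Fin m) (Fin m) k) (g : Matrix (Fin n) (Fin n) k),
    IsUnit h.det ∧ IsUnit g.det ∧ A = kron h g}

/-- `P_{N-1,1}(k)`: invertible `N × N` matrices whose last row is `(0,…,0,d)`, `d ≠ 0`. -/
def ParabP (k : Type*) [Field k] (N : ℕ) : Set (Matrix (Fin N) (Fin N) k) :=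
  {A | IsUnit A.det ∧ ∀ i j : Fin N, (i : ℕ) = N - 1 → (j : ℕ) ≠ N - 1 → A i j = 0}

/-- The permutation matrix `w_j` (with `1 ≤ j ≤ N`), given in block form by rows
`((I_{j−1},0,0),(0,0,I_{N−j}),(0,1,0))`, the middle column block having width 1. -/
def wMat (k : Type*) [Field k] (N j : ℕ) : Matrix (Fin N) (Fin N) k :=
  Matrix.of fun i l =>
    if (l : ℕ) = (if (i : ℕ) + 1 < j then (i : ℕ)
                  else if (i : ℕ) + 1 < N then (i : ℕ) + 1 else j - 1)
    then 1 else 0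

/-- The unipotent matrix `u_j(v)` (with `1 ≤ j ≤ N`, `v` a row vector of length `N - j`):
the identity except that its `j`-th row is `(0,…,0,1,v)` with the `1` in position `j`. -/
def uMat (k : Type*) [Field k] (N j : ℕ) (v : Fin (N - j) → k) : Matrix (Fin N) (Fin N) k :=
  Matrix.of fun i l =>
    if (i : ℕ) = j - 1 then
      (if (l : ℕ) = j - 1 then 1
       else if h : j ≤ (l : ℕ) then v ⟨(l : ℕ) - j, by have := l.isLt; omega⟩ else 0)
    else if l = i then 1 else 0

/-- The row vector `b_r ∈ k^{rn}` given by concatenating the standard basis row vectors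
`e_{n-1}, e_{n-2}, …, e_{n-r}` of `k^n`: its block `p` (0-based) is `e_{n-1-p}`. -/
def bVec (k : Type*) [Field k] (n : ℕ) {M : ℕ} : Fin M → k :=
  fun i => if (i : ℕ) % n + (i : ℕ) / n + 2 = n then 1 else 0

/-- The representative `ε_r := w_{(m−r)n} · u_{(m−r)n}(b_r) ∈ GL_{mn}(k)`. -/
def epsMat (k : Type*) [Field k] (m n r : ℕ) : Matrix (Fin (m * n)) (Fin (m * n)) k :=
  wMat k (m * n) ((m - r) * n) * uMat k (m * n) ((m - r) * n) (bVec k n)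

/-- The double coset `P_{mn−1,1}(k) · A · T_{m,n}(k)`. -/
def dCoset (k : Type*) [Field k] (m n : ℕ) (A : Matrix (Fin (m * n)) (Fin (m * n)) k) :
    Set (Matrix (Fin (m * n)) (Fin (m * n)) k) :=
  {X | ∃ p ∈ ParabP k (m * n), ∃ t ∈ TSet k m n, X = p * A * t}

section Kron
variable {k : Type*} [Field k] {m n : ℕ}

lemma kron_eq (h : Matrix (Fin m) (Fin m) k) (g : Matrix (Fin n) (Fin n) k) :
    kron h g = (Matrix.kroneckerMap (· * ·) h g).submatrix
      (⇑(finProdFinEquiv (m := m) (n := n)).symm) (⇑(finProdFinEquiv).symm) := by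
  ext x y
  simp [kron, Matrix.submatrix_apply, finProdFinEquiv_symm_apply, Matrix.kroneckerMap_apply]

lemma kron_mul (h h' : Matrix (Fin m) (Fin m) k) (g g' : Matrix (Fin n) (Fin n) k) :
    kron h g * kron h' g' = kron (h * h') (g * g') := by
  rw [kron_eq, kron_eq, kron_eq, Matrix.submatrix_mul_equiv, ← Matrix.mul_kronecker_mul]

lemma kron_one : kron (1 : Matrix (Fin m) (Fin m) k) (1 : Matrix (Fin n) (Fin n) k) = 1 := by
  rw [kron_eq]
  rw [Matrix.one_kronecker_one, Matrix.submatrix_one_equiv]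

lemma det_kron (h : Matrix (Fin m) (Fin m) k) (g : Matrix (Fin n) (Fin n) k) :
    (kron h g).det = h.det ^ n * g.det ^ m := by
  rw [kron_eq, Matrix.det_submatrix_equiv_self, Matrix.det_kronecker]; simp

end Kron
section Groups
variable {k : Type*} [Field k] {m n : ℕ}

lemma TSet.one_mem : (1 : Matrix (Fin (m*n)) (Fin (m*n)) k) ∈ TSet k m n :=
  ⟨1, 1, by simp, by simp, kron_one.symm⟩

lemma TSet.isUnit_det {t : Matrix (Fin (m*n)) (Fin (m*n)) k} (ht : t ∈ TSet k m n) :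
    IsUnit t.det := by
  obtain ⟨h, g, hh, hg, rfl⟩ := ht
  rw [det_kron]
  exact (hh.pow n).mul (hg.pow m)

lemma TSet.mul_mem {t t' : Matrix (Fin (m*n)) (Fin (m*n)) k} (ht : t ∈ TSet k m n)
    (ht' : t' ∈ TSet k m n) : t * t' ∈ TSet k m n := by
  obtain ⟨h, g, hh, hg, rfl⟩ := ht
  obtain ⟨h', g', hh', hg', rfl⟩ := ht'
  exact ⟨h * h', g * g', by rw [Matrix.det_mul]; exact hh.mul hh', by rw [Matrix.det_mul]; exact hg.mul hg', kron_mul h h' g g'⟩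


lemma TSet.exists_inv {t : Matrix (Fin (m*n)) (Fin (m*n)) k} (ht : t ∈ TSet k m n) :
    ∃ t' ∈ TSet k m n, t * t' = 1 ∧ t' * t = 1 := by
  obtain ⟨h, g, hh, hg, rfl⟩ := ht
  refine ⟨kron h⁻¹ g⁻¹, ⟨h⁻¹, g⁻¹, Matrix.isUnit_nonsing_inv_det _ hh,
    Matrix.isUnit_nonsing_inv_det _ hg, rfl⟩, ?_, ?_⟩
  · rw [kron_mul, Matrix.mul_nonsing_inv _ hh, Matrix.mul_nonsing_inv _ hg, kron_one]
  · rw [kron_mul, Matrix.nonsing_inv_mul _ hh, Matrix.nonsing_inv_mul _ hg, kron_one]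

variable {N : ℕ}

/-- Row of a product. -/
lemma row_mul (M P : Matrix (Fin N) (Fin N) k) (i : Fin N) :
    (M * P) i = M i ᵥ* P := by
  funext l
  simp [Matrix.mul_apply, Matrix.vecMul, dotProduct]

lemma ParabP.mul_mem {p q : Matrix (Fin N) (Fin N) k} (hp : p ∈ ParabP k N)
    (hq : q ∈ ParabP k N) : p * q ∈ ParabP k N := by
  obtain ⟨hp1, hp2⟩ := hp
  obtain ⟨hq1, hq2⟩ := hq
  refine ⟨by rw [Matrix.det_mul]; exact hp1.mul hq1, fun i l hi hl => ?_⟩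
  rw [Matrix.mul_apply]
  refine Finset.sum_eq_zero fun s _ => ?_
  by_cases hs : (s : ℕ) = N - 1
  · rw [hq2 s l hs hl, mul_zero]
  · rw [hp2 i s hi hs, zero_mul]

lemma ParabP.lastCol_ne_zero {p : Matrix (Fin N) (Fin N) k} (hp : p ∈ ParabP k N)
    (i : Fin N) (hi : (i : ℕ) = N - 1) : p i i ≠ 0 := by
  intro h0
  have : p.det = 0 := by
    apply Matrix.det_eq_zero_of_row_eq_zero i
    intro l
    by_cases hl : (l : ℕ) = N - 1
    · have hli : l = i := Fin.ext (by omega)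
      rw [hli]; exact h0
    · exact hp.2 i l hi hl
  exact hp.1.ne_zero this

lemma ParabP.inv_mem {p : Matrix (Fin N) (Fin N) k} (hp : p ∈ ParabP k N) :
    p⁻¹ ∈ ParabP k N := by
  refine ⟨Matrix.isUnit_nonsing_inv_det _ hp.1, fun i l hi hl => ?_⟩
  have h1 : (p * p⁻¹) i l = 0 := by
    rw [Matrix.mul_nonsing_inv _ hp.1]
    exact Matrix.one_apply_ne (fun h => hl (by rw [← h, hi]))
  rw [Matrix.mul_apply, Finset.sum_eq_single i] at h1
  · exact (mul_eq_zero.mp h1).resolve_left (ParabP.lastCol_ne_zero hp i hi)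
  · intro s _ hs
    rw [hp.2 i s hi (fun h => hs (Fin.ext (by omega))), zero_mul]
  · intro h; exact absurd (Finset.mem_univ i) h

end Groups
section Coset
variable {k : Type*} [Field k] {m n : ℕ}

lemma dCoset_eq_of_rel {A B p t : Matrix (Fin (m*n)) (Fin (m*n)) k}
    (hp : p ∈ ParabP k (m*n)) (ht : t ∈ TSet k m n) (hB : B = p * A * t) :
    dCoset k m n A = dCoset k m n B := by
  obtain ⟨t', ht', htt', ht't⟩ := TSet.exists_inv ht
  have hAB : A = p⁻¹ * B * t' := by
    rw [hB]
    simp only [← Matrix.mul_assoc]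
    rw [Matrix.nonsing_inv_mul _ hp.1, Matrix.one_mul, Matrix.mul_assoc, htt', Matrix.mul_one]
  ext X
  constructor
  · rintro ⟨q, hq, s, hs, rfl⟩
    refine ⟨q * p⁻¹, ParabP.mul_mem hq (ParabP.inv_mem hp), t' * s, TSet.mul_mem ht' hs, ?_⟩
    rw [hAB]; simp only [Matrix.mul_assoc]
  · rintro ⟨q, hq, s, hs, rfl⟩
    refine ⟨q * p, ParabP.mul_mem hq hp, t * s, TSet.mul_mem ht hs, ?_⟩
    rw [hB]; simp only [Matrix.mul_assoc]

/-- If the last rows match up to right multiplication by an element of `TSet`,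
the double cosets agree. -/
lemma dCoset_eq_of_lastRow (hN : 0 < m * n) {A B t : Matrix (Fin (m*n)) (Fin (m*n)) k}
    (hA : IsUnit A.det) (hB : IsUnit B.det) (ht : t ∈ TSet k m n)
    (hlast : B ⟨m*n-1, by omega⟩ = A ⟨m*n-1, by omega⟩ ᵥ* t) :
    dCoset k m n A = dCoset k m n B := by
  obtain ⟨t', ht', htt', ht't⟩ := TSet.exists_inv ht
  set lastI : Fin (m*n) := ⟨m*n-1, by omega⟩ with hlastI
  set p : Matrix (Fin (m*n)) (Fin (m*n)) k := B * (t' * A⁻¹) with hpdef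
  have hBp : B = p * A * t := by
    have h1 : t' * A⁻¹ * A = t' := by
      rw [Matrix.mul_assoc, Matrix.nonsing_inv_mul _ hA, Matrix.mul_one]
    rw [hpdef, Matrix.mul_assoc B (t' * A⁻¹) A, h1,
      Matrix.mul_assoc B t' t, ht't, Matrix.mul_one]
  have hrow : p lastI = (1 : Matrix (Fin (m*n)) (Fin (m*n)) k) lastI := by
    rw [hpdef, row_mul, hlast, Matrix.vecMul_vecMul, ← Matrix.mul_assoc, htt',
      Matrix.one_mul, ← row_mul A A⁻¹]
    rw [Matrix.mul_nonsing_inv _ hA]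
  have hpmem : p ∈ ParabP k (m*n) := by
    constructor
    · rw [hpdef, Matrix.det_mul, Matrix.det_mul]
      exact (hB.mul ((TSet.isUnit_det ht').mul (Matrix.isUnit_nonsing_inv_det _ hA)))
    · intro i l hi hl
      have hieq : i = lastI := Fin.ext (by simp [hlastI]; omega)
      rw [hieq, hrow]
      exact Matrix.one_apply_ne (fun h => hl (by rw [← h]))
  exact dCoset_eq_of_rel hpmem ht hBp

end Coset
section RankEquiv
variable {k : Type*} [Field k]

open Module LinearMap

/-- Restriction of `f` to a complement of its kernel is an equivalence onto the range. -/
lemma equivOfCompl {V W : Type*} [AddCommGroup V] [Module k V] [AddCommGroup W] [Module k W]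
    (f : V →ₗ[k] W) (C : Submodule k V) (hC : IsCompl (LinearMap.ker f) C) :
    ∃ e : C ≃ₗ[k] LinearMap.range f, ∀ x : C, (e x : W) = f x := by
  set φ : C →ₗ[k] LinearMap.range f :=
    (f.domRestrict C).codRestrict _ (fun x => LinearMap.mem_range_self _ _) with hφ
  have hinj : Function.Injective φ := by
    rw [← LinearMap.ker_eq_bot, Submodule.eq_bot_iff]
    rintro ⟨x, hxC⟩ hx
    have hxk : x ∈ LinearMap.ker f := by
      exact LinearMap.mem_ker.mpr (congrArg Subtype.val (LinearMap.mem_ker.mp hx))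
    have : x = 0 := (Submodule.disjoint_def.mp hC.disjoint) x hxk hxC
    simpa [Subtype.ext_iff] using this
  have hsurj : Function.Surjective φ := by
    rintro ⟨w, hw⟩
    obtain ⟨x, rfl⟩ := hw
    have hx : x ∈ LinearMap.ker f ⊔ C := by rw [hC.sup_eq_top]; trivial
    obtain ⟨u, hu, v, hv, rfl⟩ := Submodule.mem_sup.mp hx
    refine ⟨⟨v, hv⟩, ?_⟩
    ext
    simp [hφ, LinearMap.mem_ker.mp hu]
    rfl
  exact ⟨LinearEquiv.ofBijective φ ⟨hinj, hsurj⟩, fun x => rfl⟩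

lemma exists_equiv_of_rank_eq {V W : Type*} [AddCommGroup V] [Module k V] [AddCommGroup W]
    [Module k W] [FiniteDimensional k V] [FiniteDimensional k W]
    (f g : V →ₗ[k] W)
    (hr : finrank k (LinearMap.range f) = finrank k (LinearMap.range g)) :
    ∃ (a : W ≃ₗ[k] W) (b : V ≃ₗ[k] V), a.toLinearMap ∘ₗ g ∘ₗ b.toLinearMap = f := by
  obtain ⟨Cf, hCf⟩ := Submodule.exists_isCompl (LinearMap.ker f)
  obtain ⟨Cg, hCg⟩ := Submodule.exists_isCompl (LinearMap.ker g)
  obtain ⟨Df, hDf⟩ := Submodule.exists_isCompl (LinearMap.range f)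
  obtain ⟨Dg, hDg⟩ := Submodule.exists_isCompl (LinearMap.range g)
  obtain ⟨ef, hef⟩ := equivOfCompl f Cf hCf
  obtain ⟨eg, heg⟩ := equivOfCompl g Cg hCg
  have hrk : finrank k (LinearMap.ker g) = finrank k (LinearMap.ker f) := by
    have h1 := LinearMap.finrank_range_add_finrank_ker f
    have h2 := LinearMap.finrank_range_add_finrank_ker g
    omega
  have hdim : finrank k Dg = finrank k Df := by
    have h1 := Submodule.finrank_add_eq_of_isCompl hDf
    have h2 := Submodule.finrank_add_eq_of_isCompl hDg
    omega
  set μ : LinearMap.range g ≃ₗ[k] LinearMap.range f := LinearEquiv.ofFinrankEq _ _ hr.symm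
    with hμ
  set eK : (LinearMap.ker g : Submodule k V) ≃ₗ[k] LinearMap.ker f :=
    LinearEquiv.ofFinrankEq _ _ hrk with heK
  set δ : (Dg : Submodule k W) ≃ₗ[k] Df := LinearEquiv.ofFinrankEq _ _ hdim with hδ
  set eC : (Cg : Submodule k V) ≃ₗ[k] Cf := eg.trans (μ.trans ef.symm) with heC
  set b : V ≃ₗ[k] V :=
    (Submodule.prodEquivOfIsCompl _ _ hCg).symm.trans
      ((eK.prodCongr eC).trans (Submodule.prodEquivOfIsCompl _ _ hCf)) with hb
  set a : W ≃ₗ[k] W :=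
    (Submodule.prodEquivOfIsCompl _ _ hDg).symm.trans
      ((μ.prodCongr δ).trans (Submodule.prodEquivOfIsCompl _ _ hDf)) with ha
  have key : ∀ x : V, a (g x) = f (b x) := by
    intro x
    have hx : x ∈ LinearMap.ker g ⊔ Cg := by rw [hCg.sup_eq_top]; trivial
    obtain ⟨u, hu, v, hv, rfl⟩ := Submodule.mem_sup.mp hx
    -- compute b (u + v)
    have hsymm : (Submodule.prodEquivOfIsCompl _ _ hCg).symm (u + v) = (⟨u, hu⟩, ⟨v, hv⟩) := by
      rw [LinearEquiv.symm_apply_eq, Submodule.coe_prodEquivOfIsCompl']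
    have hbx : b (u + v) = (eK ⟨u, hu⟩ : V) + (eC ⟨v, hv⟩ : V) := by
      rw [hb]
      simp only [LinearEquiv.trans_apply, hsymm, LinearEquiv.prodCongr_apply,
        Submodule.coe_prodEquivOfIsCompl']
    -- compute g (u + v)
    have hgx : g (u + v) = (eg ⟨v, hv⟩ : W) := by
      rw [map_add, LinearMap.mem_ker.mp hu, zero_add, heg]
    -- a on an element of range g
    have hsymm2 : (Submodule.prodEquivOfIsCompl _ _ hDg).symm ((eg ⟨v, hv⟩ : W))
        = (eg ⟨v, hv⟩, 0) := Submodule.prodEquivOfIsCompl_symm_apply_left _ _ hDg _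
    have hax : a (g (u + v)) = (μ (eg ⟨v, hv⟩) : W) := by
      rw [hgx, ha]
      simp only [LinearEquiv.trans_apply, hsymm2, LinearEquiv.prodCongr_apply,
        Submodule.coe_prodEquivOfIsCompl']
      simp
    -- f on b x
    have hfx : f (b (u + v)) = (μ (eg ⟨v, hv⟩) : W) := by
      rw [hbx, map_add]
      have h1 : f ((eK ⟨u, hu⟩ : V)) = 0 := LinearMap.mem_ker.mp (eK ⟨u, hu⟩).2
      rw [h1, zero_add, ← hef (eC ⟨v, hv⟩)]
      rw [heC]
      simp only [LinearEquiv.trans_apply]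
      rw [LinearEquiv.apply_symm_apply]
    rw [hax, hfx]
  refine ⟨a, b.symm, ?_⟩
  ext x
  simp only [LinearMap.comp_apply, LinearEquiv.coe_coe]
  rw [key (b.symm x), LinearEquiv.apply_symm_apply]

end RankEquiv
section MatrixEquiv
variable {k : Type*} [Field k]

open Module

lemma isUnit_det_toMatrix' {N : ℕ} (a : ((Fin N → k)) ≃ₗ[k] (Fin N → k)) :
    IsUnit (LinearMap.toMatrix' a.toLinearMap).det := by
  apply IsUnit.of_mul_eq_one (LinearMap.toMatrix' a.symm.toLinearMap).det
  rw [← Matrix.det_mul, ← LinearMap.toMatrix'_comp]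
  have : a.toLinearMap ∘ₗ a.symm.toLinearMap = LinearMap.id := by
    ext x; simp
  rw [this, LinearMap.toMatrix'_id, Matrix.det_one]

lemma exists_units_mul_of_rank_eq {m n : ℕ} (X Y : Matrix (Fin m) (Fin n) k)
    (h : X.rank = Y.rank) :
    ∃ (P : Matrix (Fin m) (Fin m) k) (Q : Matrix (Fin n) (Fin n) k), IsUnit P.det ∧ IsUnit Q.det ∧ X = P * Y * Q := by
  obtain ⟨a, b, hab⟩ := exists_equiv_of_rank_eq X.mulVecLin Y.mulVecLin h
  refine ⟨LinearMap.toMatrix' a.toLinearMap, LinearMap.toMatrix' b.toLinearMap,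
    isUnit_det_toMatrix' a, isUnit_det_toMatrix' b, ?_⟩
  have hX : X = LinearMap.toMatrix' (X.mulVecLin) := by
    rw [← Matrix.toLin'_apply', LinearMap.toMatrix'_toLin']
  have hY : Y.mulVecLin = Matrix.toLin' Y := (Matrix.toLin'_apply' Y).symm
  rw [hX, ← hab, hY, LinearMap.toMatrix'_comp, LinearMap.toMatrix'_comp,
    LinearMap.toMatrix'_toLin', Matrix.mul_assoc]

end MatrixEquiv
section Reshape
variable {k : Type*} [Field k] {m n : ℕ}

/-- Reshape a row vector of length `m*n` into an `m × n` matrix (row-major). -/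
def resh (x : Fin (m*n) → k) : Matrix (Fin m) (Fin n) k :=
  Matrix.of fun a b => x (finProdFinEquiv (a, b))

omit [Field k] in
lemma resh_injective : Function.Injective (resh (k := k) (m := m) (n := n)) := by
  intro x y hxy
  funext l
  have h1 : finProdFinEquiv ((l.divNat, l.modNat) : Fin m × Fin n) = l := by
    rw [← finProdFinEquiv_symm_apply]
    exact finProdFinEquiv.apply_symm_apply l
  have := congrFun (congrFun hxy l.divNat) l.modNat
  simpa [resh, h1] using this

lemma divNat_finProdFinEquiv (a : Fin m) (b : Fin n) :
    (finProdFinEquiv (a, b)).divNat = a := by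
  have := finProdFinEquiv.symm_apply_apply (a, b)
  rw [finProdFinEquiv_symm_apply] at this
  exact congrArg Prod.fst this

lemma modNat_finProdFinEquiv (a : Fin m) (b : Fin n) :
    (finProdFinEquiv (a, b)).modNat = b := by
  have := finProdFinEquiv.symm_apply_apply (a, b)
  rw [finProdFinEquiv_symm_apply] at this
  exact congrArg Prod.snd this

lemma resh_vecMul_kron (x : Fin (m*n) → k) (h : Matrix (Fin m) (Fin m) k)
    (g : Matrix (Fin n) (Fin n) k) :
    resh (x ᵥ* kron h g) = hᵀ * resh x * g := by
  ext a b
  have lhs : resh (x ᵥ* kron h g) a b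
      = ∑ z : Fin (m*n), x z * (h z.divNat a * g z.modNat b) := by
    simp [resh, Matrix.vecMul, dotProduct, kron, divNat_finProdFinEquiv,
      modNat_finProdFinEquiv]
  rw [lhs, ← Equiv.sum_comp (finProdFinEquiv (m := m) (n := n)), Fintype.sum_prod_type]
  simp only [divNat_finProdFinEquiv, modNat_finProdFinEquiv]
  simp only [Matrix.mul_apply, Matrix.transpose_apply, resh, Matrix.of_apply,
    Finset.sum_mul, Finset.mul_sum]
  rw [Finset.sum_comm]
  apply Finset.sum_congr rfl
  intro b' _
  apply Finset.sum_congr rfl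
  intro a' _
  ring

end Reshape
section RankFacts
variable {k : Type*} [Field k] {m n : ℕ}

open Module

lemma rank_pos_of_entry_ne_zero (X : Matrix (Fin m) (Fin n) k) (a : Fin m) (b : Fin n)
    (hX : X a b ≠ 0) : 1 ≤ X.rank := by
  rw [Nat.one_le_iff_ne_zero]
  intro h0
  have hcol : X.mulVecLin (Pi.single b 1) ∈ LinearMap.range X.mulVecLin :=
    LinearMap.mem_range_self _ _
  have hne : X.mulVecLin (Pi.single b 1) ≠ 0 := by
    intro hz
    apply hX
    have := congrFun hz a
    simpa [Matrix.mulVecLin_apply, Matrix.mulVec_single] using this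
  rw [Matrix.rank, Submodule.finrank_eq_zero] at h0
  rw [h0] at hcol
  exact hne (by simpa using hcol)

/-- The canonical "anti-diagonal strip" matrix of rank `r+1`. -/
def XE (k : Type*) [Field k] (m n r : ℕ) : Matrix (Fin m) (Fin n) k :=
  Matrix.of fun a b => if (a : ℕ) + (b : ℕ) + r + 2 = m + n then 1 else 0

lemma rank_XE (r : ℕ) (hr : r ≤ n - 1) (hn : 1 ≤ n) (hnm : n ≤ m) :
    (XE k m n r).rank = r + 1 := by
  have hrn : r < n := by omega
  have hrm : r < m := by omega
  set c : Fin (r+1) → (Fin m → k) := fun q => Pi.single ⟨m - 1 - (q : ℕ), by omega⟩ 1 with hc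
  -- characterize the columns
  have hcol : ∀ b : Fin n, n ≤ (b : ℕ) + r + 1 →
      (XE k m n r)ᵀ b = c ⟨(b : ℕ) + r + 1 - n, by omega⟩ := by
    intro b hb
    funext a
    simp only [Matrix.transpose_apply, XE, Matrix.of_apply, hc]
    by_cases ha : (a : ℕ) + (b : ℕ) + r + 2 = m + n
    · rw [if_pos ha]
      have heq : a = (⟨m - 1 - ((b : ℕ) + r + 1 - n), by omega⟩ : Fin m) := by
        apply Fin.ext
        show (a : ℕ) = m - 1 - ((b : ℕ) + r + 1 - n)
        have := b.isLt
        omega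
      rw [heq, Pi.single_eq_same]
    · rw [if_neg ha, Pi.single_eq_of_ne]
      intro heq
      apply ha
      have := congrArg Fin.val heq
      simp only at this
      have hbn := b.isLt
      have han := a.isLt
      omega
  have hcol0 : ∀ b : Fin n, (b : ℕ) + r + 1 < n → (XE k m n r)ᵀ b = 0 := by
    intro b hb
    funext a
    simp only [Matrix.transpose_apply, XE, Matrix.of_apply, Pi.zero_apply]
    rw [if_neg]
    have := a.isLt
    omega
  have hspan : Submodule.span k (Set.range (XE k m n r)ᵀ) = Submodule.span k (Set.range c) := by
    apply le_antisymm
    · rw [Submodule.span_le]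
      rintro _ ⟨b, rfl⟩
      by_cases hb : n ≤ (b : ℕ) + r + 1
      · rw [hcol b hb]
        exact Submodule.subset_span ⟨_, rfl⟩
      · rw [hcol0 b (by omega)]
        exact Submodule.zero_mem _
    · rw [Submodule.span_le]
      rintro _ ⟨q, rfl⟩
      have hq := q.isLt
      have : c q = (XE k m n r)ᵀ ⟨n - 1 - r + (q : ℕ), by omega⟩ := by
        rw [hcol ⟨n - 1 - r + (q : ℕ), by omega⟩ (by simp; omega)]
        apply congrArg
        apply Fin.ext
        show (q : ℕ) = (n - 1 - r + (q : ℕ)) + r + 1 - n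
        omega
      rw [this]
      exact Submodule.subset_span ⟨_, rfl⟩
  have hli : LinearIndependent k c := by
    have hinj : Function.Injective (fun q : Fin (r+1) => (⟨m - 1 - (q : ℕ), by omega⟩ : Fin m)) := by
      intro q q' hqq'
      have := congrArg Fin.val hqq'
      simp only at this
      have h1 := q.isLt
      have h2 := q'.isLt
      apply Fin.ext
      omega
    have h := (Pi.basisFun k (Fin m)).linearIndependent.comp _ hinj
    have hfe : c = ⇑(Pi.basisFun k (Fin m)) ∘ (fun q : Fin (r+1) =>
        (⟨m - 1 - (q : ℕ), by omega⟩ : Fin m)) := by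
      funext q
      simp [hc, Pi.basisFun_apply]
    rw [hfe]
    exact h
  rw [Matrix.rank_eq_finrank_span_cols, show (XE k m n r).col = (XE k m n r)ᵀ from rfl, hspan, finrank_span_eq_card hli, Fintype.card_fin]

end RankFacts
section WU
variable {k : Type*} [Field k] {N : ℕ}

lemma wMat_lastRow (j : ℕ) (hN : 0 < N) (hj2 : j ≤ N) (p : Fin N) :
    wMat k N j ⟨N - 1, by omega⟩ p = if (p : ℕ) = j - 1 then 1 else 0 := by
  show (if (p : ℕ) = (if (N-1) + 1 < j then (N-1) else if (N-1) + 1 < N then (N-1) + 1 else j - 1)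
      then (1:k) else 0) = _
  rw [if_neg (by omega : ¬ (N-1) + 1 < j), if_neg (by omega : ¬ (N-1) + 1 < N)]

lemma wu_lastRow (j : ℕ) (hN : 0 < N) (hj1 : 1 ≤ j) (hj2 : j ≤ N) (v : Fin (N - j) → k)
    (l : Fin N) :
    (wMat k N j * uMat k N j v) ⟨N - 1, by omega⟩ l = uMat k N j v ⟨j - 1, by omega⟩ l := by
  rw [Matrix.mul_apply, Finset.sum_eq_single (⟨j - 1, by omega⟩ : Fin N)]
  · rw [wMat_lastRow j hN hj2]
    simp
  · intro b _ hb
    rw [wMat_lastRow j hN hj2, if_neg, zero_mul]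
    intro hval
    exact hb (Fin.ext hval)
  · intro h; exact absurd (Finset.mem_univ _) h

lemma uMat_row (j : ℕ) (hj1 : 1 ≤ j) (hj2 : j ≤ N) (v : Fin (N - j) → k) (l : Fin N) :
    uMat k N j v ⟨j - 1, by omega⟩ l =
      if (l : ℕ) = j - 1 then 1
      else if h : j ≤ (l : ℕ) then v ⟨(l : ℕ) - j, by have := l.isLt; omega⟩ else 0 := by
  show (if (j-1 : ℕ) = j - 1 then _ else _) = _
  rw [if_pos rfl]

lemma isUnit_det_wMat (j : ℕ) (hN : 0 < N) (hj1 : 1 ≤ j) (hj2 : j ≤ N) :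
    IsUnit (wMat k N j).det := by
  set F : Fin N → ℕ := fun i =>
    if (i : ℕ) + 1 < j then (i : ℕ) else if (i : ℕ) + 1 < N then (i : ℕ) + 1 else j - 1 with hF
  have hFlt : ∀ i : Fin N, F i < N := by
    intro i
    have := i.isLt
    simp only [hF]
    split_ifs <;> omega
  have hFinj : ∀ i i' : Fin N, F i = F i' → i = i' := by
    intro i i' h
    have h1 := i.isLt
    have h2 := i'.isLt
    simp only [hF] at h
    split_ifs at h <;> (apply Fin.ext; omega)
  have hw : ∀ (i : Fin N) (l : Fin N), wMat k N j i l = if (l : ℕ) = F i then 1 else 0 := by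
    intro i l; rfl
  have hmul : wMat k N j * (wMat k N j)ᵀ = 1 := by
    ext i i'
    rw [Matrix.mul_apply, Finset.sum_eq_single (⟨F i, hFlt i⟩ : Fin N)]
    · rw [Matrix.transpose_apply, hw, hw, if_pos rfl]
      by_cases h : i = i'
      · subst h; simp
      · rw [if_neg, Matrix.one_apply_ne h, mul_zero]
        intro hFi
        exact h (hFinj i i' hFi)
    · intro b _ hb
      rw [hw, if_neg, zero_mul]
      intro hval
      exact hb (Fin.ext hval)
    · intro h; exact absurd (Finset.mem_univ _) h
  exact IsUnit.of_mul_eq_one _ (by rw [← Matrix.det_mul, hmul, Matrix.det_one])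

lemma det_uMat (j : ℕ) (hj1 : 1 ≤ j) (v : Fin (N - j) → k) : (uMat k N j v).det = 1 := by
  have htri : (uMat k N j v).BlockTriangular id := by
    intro a b hab
    simp only [id_eq] at hab
    have hab' : (b : ℕ) < (a : ℕ) := hab
    show (if (a : ℕ) = j - 1 then _ else _) = (0:k)
    by_cases ha : (a : ℕ) = j - 1
    · rw [if_pos ha, if_neg (by omega : ¬ (b : ℕ) = j - 1), dif_neg (by omega : ¬ j ≤ (b : ℕ))]
    · rw [if_neg ha, if_neg (by intro h; rw [h] at hab'; exact lt_irrefl _ hab')]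
  rw [Matrix.det_of_upperTriangular htri]
  apply Finset.prod_eq_one
  intro i _
  show (if (i : ℕ) = j - 1 then _ else _) = (1:k)
  by_cases hi : (i : ℕ) = j - 1
  · rw [if_pos hi, if_pos hi]
  · rw [if_neg hi, if_pos rfl]

end WU
section Eps
variable {k : Type*} [Field k] {m n : ℕ}

lemma resh_eps (r : ℕ) (hr : r ≤ n - 1) (hn : 1 ≤ n) (hnm : n ≤ m) :
    resh (fun l => epsMat k m n r ⟨m*n - 1, by
        have := Nat.mul_pos (show 0 < m by omega) (show 0 < n by omega); omega⟩ l)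
      = XE k m n r := by
  have hN : 0 < m * n := Nat.mul_pos (by omega) (by omega)
  have h1 : 1 ≤ m - r := by omega
  set j' : ℕ := (m - r) * n with hj'
  have hj'1 : 1 ≤ j' := by
    have := Nat.mul_le_mul (show 1 ≤ m - r by omega) (show 1 ≤ n by omega)
    simpa [hj'] using this
  have hj'2 : j' ≤ m * n := Nat.mul_le_mul_right n (by omega)
  have e1 : (m - r) * n = (m - r - 1) * n + n := by
    have h := Nat.succ_mul (m - r - 1) n
    have h2 : m - r - 1 + 1 = m - r := by omega
    rw [← h2]
    exact h
  have e4 : (m - r) * n = n * (m - r) := Nat.mul_comm _ _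
  have e5 : (m - r - 1) * n = n * (m - r - 1) := Nat.mul_comm _ _
  ext a b
  have ha := a.isLt
  have hb := b.isLt
  have hlval : ((finProdFinEquiv (a, b) : Fin (m*n)) : ℕ) = (b : ℕ) + n * (a : ℕ) := by
    simp [finProdFinEquiv]
  show (epsMat k m n r) _ (finProdFinEquiv (a, b)) = _
  rw [epsMat, wu_lastRow j' hN hj'1 hj'2 (bVec k n) (finProdFinEquiv (a, b)),
    uMat_row j' hj'1 hj'2 (bVec k n) (finProdFinEquiv (a, b))]
  show _ = XE k m n r a b
  rw [XE]
  simp only [Matrix.of_apply, hlval]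
  by_cases hc1 : (b : ℕ) + n * (a : ℕ) = j' - 1
  · -- then a = m-r-1, b = n-1
    have e2 : j' - 1 = (n - 1) + n * (m - r - 1) := by omega
    have hdiv : ((n - 1 : ℕ) + n * (m - r - 1)) / n = m - r - 1 := by
      rw [Nat.add_mul_div_left _ _ (show 0 < n by omega), Nat.div_eq_of_lt (by omega), zero_add]
    have hmod : ((n - 1 : ℕ) + n * (m - r - 1)) % n = n - 1 := by
      rw [Nat.add_mul_mod_self_left, Nat.mod_eq_of_lt (by omega)]
    have hdiv2 : ((b : ℕ) + n * (a : ℕ)) / n = (a : ℕ) := by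
      rw [Nat.add_mul_div_left _ _ (show 0 < n by omega), Nat.div_eq_of_lt hb, zero_add]
    have hmod2 : ((b : ℕ) + n * (a : ℕ)) % n = (b : ℕ) := by
      rw [Nat.add_mul_mod_self_left, Nat.mod_eq_of_lt hb]
    have haa : (a : ℕ) = m - r - 1 := by
      rw [← hdiv2, hc1, e2, hdiv]
    have hbb : (b : ℕ) = n - 1 := by
      rw [← hmod2, hc1, e2, hmod]
    rw [if_pos hc1, if_pos (by omega)]
  · rw [if_neg hc1]
    by_cases hc2 : j' ≤ (b : ℕ) + n * (a : ℕ)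
    · rw [dif_pos hc2]
      have haa : m - r ≤ (a : ℕ) := by
        by_contra hcon
        push_neg at hcon
        have : n * (a : ℕ) ≤ n * (m - r - 1) := Nat.mul_le_mul_left n (by omega)
        omega
      have e3 : n * (a : ℕ) = n * ((a : ℕ) - (m - r)) + n * (m - r) := by
        rw [← Nat.mul_add]
        congr 1
        omega
      have hi : (b : ℕ) + n * (a : ℕ) - j' = (b : ℕ) + n * ((a : ℕ) - (m - r)) := by omega
      show bVec k n _ = _
      rw [bVec]
      simp only
      have hmod3 : ((b : ℕ) + n * ((a : ℕ) - (m - r))) % n = (b : ℕ) := by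
        rw [Nat.add_mul_mod_self_left, Nat.mod_eq_of_lt hb]
      have hdiv3 : ((b : ℕ) + n * ((a : ℕ) - (m - r))) / n = (a : ℕ) - (m - r) := by
        rw [Nat.add_mul_div_left _ _ (show 0 < n by omega), Nat.div_eq_of_lt hb, zero_add]
      have hkey : (((b : ℕ) + n * (a : ℕ) - j') % n + ((b : ℕ) + n * (a : ℕ) - j') / n + 2 = n)
          ↔ ((a : ℕ) + (b : ℕ) + r + 2 = m + n) := by
        rw [hi, hmod3, hdiv3]
        omega
      by_cases hcond : (a : ℕ) + (b : ℕ) + r + 2 = m + n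
      · rw [if_pos (hkey.mpr hcond), if_pos hcond]
      · rw [if_neg (fun h => hcond (hkey.mp h)), if_neg hcond]
    · rw [dif_neg hc2]
      rw [if_neg]
      intro hcond
      push_neg at hc2
      have haa : (a : ℕ) ≤ m - r - 1 := by
        by_contra hcon
        push_neg at hcon
        have : n * (m - r) ≤ n * (a : ℕ) := Nat.mul_le_mul_left n (by omega)
        omega
      have haa2 : (a : ℕ) = m - r - 1 ∧ (b : ℕ) = n - 1 := by omega
      have : n * (a : ℕ) = n * (m - r - 1) := by rw [haa2.1]
      omega

end Eps
/-- For every `1 ≤ j ≤ mn` and row vector `v ∈ k^{mn−j}`, the double coset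
`P_{mn−1,1}(k)·w_j·u_j(v)·T_{m,n}(k)` equals `P_{mn−1,1}(k)·ε_r·T_{m,n}(k)` for some
`0 ≤ r ≤ n−1`. -/
theorem statement6 (k : Type*) [Field k] (m n : ℕ) (hn : 1 ≤ n) (hnm : n ≤ m)
    (j : ℕ) (hj1 : 1 ≤ j) (hj2 : j ≤ m * n) (v : Fin (m * n - j) → k) :
    ∃ r ≤ n - 1,
      dCoset k m n (wMat k (m * n) j * uMat k (m * n) j v) = dCoset k m n (epsMat k m n r) := by
  have hN : 0 < m * n := Nat.mul_pos (by omega) (by omega)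
  set B : Matrix (Fin (m*n)) (Fin (m*n)) k := wMat k (m * n) j * uMat k (m * n) j v with hB
  set x : Fin (m*n) → k := B ⟨m*n - 1, by omega⟩ with hx
  set X : Matrix (Fin m) (Fin n) k := resh x with hX
  -- X has a nonzero entry
  have ha0 : (j-1)/n < m := by
    rw [Nat.div_lt_iff_lt_mul (show 0 < n by omega)]
    omega
  have hb0 : (j-1) % n < n := Nat.mod_lt _ (by omega)
  have hfin : finProdFinEquiv ((⟨(j-1)/n, ha0⟩ : Fin m), (⟨(j-1) % n, hb0⟩ : Fin n))
      = (⟨j - 1, by omega⟩ : Fin (m*n)) := by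
    apply Fin.ext
    show (j-1) % n + n * ((j-1)/n) = j - 1
    exact Nat.mod_add_div _ _
  have hentry : X ⟨(j-1)/n, ha0⟩ ⟨(j-1) % n, hb0⟩ = 1 := by
    show x (finProdFinEquiv (_, _)) = 1
    rw [hfin, hx, hB, wu_lastRow j hN hj1 hj2 v, uMat_row j hj1 hj2 v]
    rw [if_pos rfl]
  have hX1 : 1 ≤ X.rank := rank_pos_of_entry_ne_zero X _ _ (by rw [hentry]; exact one_ne_zero)
  have hXn : X.rank ≤ n := by
    have := X.rank_le_width
    simpa using this
  refine ⟨X.rank - 1, by omega, ?_⟩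
  set r : ℕ := X.rank - 1 with hrdef
  have hr : r ≤ n - 1 := by omega
  have hrank : X.rank = (XE k m n r).rank := by
    rw [rank_XE r hr hn hnm]
    omega
  obtain ⟨P, Q, hP, hQ, hPQ⟩ := exists_units_mul_of_rank_eq X (XE k m n r) hrank
  set t : Matrix (Fin (m*n)) (Fin (m*n)) k := kron Pᵀ Q with ht
  have htmem : t ∈ TSet k m n := ⟨Pᵀ, Q, by rwa [Matrix.det_transpose], hQ, rfl⟩
  -- determinants
  have hdetB : IsUnit B.det := by
    rw [hB, Matrix.det_mul, det_uMat j hj1 v, mul_one]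
    exact isUnit_det_wMat j hN hj1 hj2
  have h1r : 1 ≤ m - r := by omega
  have hj'1 : 1 ≤ (m - r) * n := by
    have := Nat.mul_le_mul (show 1 ≤ m - r by omega) (show 1 ≤ n by omega)
    simpa using this
  have hj'2 : (m - r) * n ≤ m * n := Nat.mul_le_mul_right n (by omega)
  have hdetE : IsUnit (epsMat k m n r).det := by
    rw [epsMat, Matrix.det_mul, det_uMat _ hj'1 _, mul_one]
    exact isUnit_det_wMat _ hN hj'1 hj'2
  -- last rows match
  have hlast : B ⟨m*n - 1, by omega⟩ = epsMat k m n r ⟨m*n - 1, by omega⟩ ᵥ* t := by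
    apply resh_injective
    rw [ht, resh_vecMul_kron, Matrix.transpose_transpose]
    have heps : resh (epsMat k m n r ⟨m*n - 1, by omega⟩) = XE k m n r :=
      resh_eps r hr hn hnm
    rw [heps, ← hPQ]
  exact (dCoset_eq_of_lastRow hN hdetE hdetB htmem hlast).symm
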